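/- For real numbers a, b ≥ 0 and ε > 0, the NCP function Φ^ε(a,b) = (1/2)(a + b − √((a−b)² + ε²)) satisfies Φ^ε(a,b) = 0 if and only if a > 0, b > 0, and a·b = ε²/4. -/
import Mathlib

theorem ncp_function_zero_iff (a b ε : ℝ) (ha : 0 ≤ a) (hb : 0 ≤ b) (hε : 0 < ε) :
    (1 / 2) * (a + b - Real.sqrt ((a - b) ^ 2 + ε ^ 2)) = 0 ↔
    0 < a ∧ 0 < b ∧ a * b = ε ^ 2 / 4 := by
  constructor
  · intro h
    have habs : a + b = Real.sqrt ((a - b) ^ 2 + ε ^ 2) := by linarith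
    have hnn : 0 ≤ (a - b) ^ 2 + ε ^ 2 := by positivity
    have hsq : (a + b) ^ 2 = (a - b) ^ 2 + ε ^ 2 := by
      rw [habs, Real.sq_sqrt hnn]
    have hab : a * b = ε ^ 2 / 4 := by nlinarith
    have habpos : 0 < a * b := by rw [hab]; positivity
    have hapos : 0 < a := lt_of_le_of_ne ha (by rintro rfl; simp at habpos)
    have hbpos : 0 < b := lt_of_le_of_ne hb (by rintro rfl; simp at habpos)
    exact ⟨hapos, hbpos, hab⟩
  · rintro ⟨hapos, hbpos, hab⟩
    have : (a - b) ^ 2 + ε ^ 2 = (a + b) ^ 2 := by nlinarith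
    rw [this, Real.sqrt_sq (by linarith)]
    ring
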